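/- Let p be a prime and f ∈ KS_{p,2} such that f(0) is a unit of ℤ_p. Then f(s) is a unit of ℤ_p for every s ∈ ℤ_p, and the pointwise inverse function s ↦ f(s)^{−1} also belongs to KS_{p,2}; in particular Δ^n (f^{−1})(s) ∈ p^n ℤ_p for all n ≥ 0 and all s ∈ ℤ_p. -/

import Mathlib

open Finset

/-- The forward difference operator `Δ_h^n` with increment `h ≥ 1`:
`Δ_h^n f(s) = ∑_{ν=0}^n (n choose ν)·(−1)^(n−ν)·f(s+νh)`. -/
noncomputable def deltaH (p : ℕ) [Fact p.Prime] (h : ℕ) (f : ℤ_[p] → ℤ_[p]) (n : ℕ)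
    (s : ℤ_[p]) : ℤ_[p] :=
  ∑ ν ∈ Finset.range (n + 1),
    (n.choose ν : ℤ_[p]) * (-1) ^ (n - ν) * f (s + (ν : ℤ_[p]) * (h : ℤ_[p]))

/-- `f ∈ KS_{p,2}`: `f` is continuous and satisfies the Kummer type congruences
`Δ^n f(s) ∈ p^n ℤ_p` for all integers `n ≥ 0` and all `s ∈ ℤ_p`. -/
def KS2 (p : ℕ) [Fact p.Prime] (f : ℤ_[p] → ℤ_[p]) : Prop :=
  Continuous f ∧ ∀ (n : ℕ) (s : ℤ_[p]), (p : ℤ_[p]) ^ n ∣ deltaH p 1 f n s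

/-! Because `p ∣ Δf`, the ultrametric inequality gives `f n ≡ f 0 (mod p)` for `n ∈ ℕ`, and by
continuity and density of `ℕ` in `ℤ_p` for all `s`; so `f` takes unit values. For `g = f⁻¹`, the
discrete Leibniz rule applied to `f * g = 1` gives, for `n ≥ 1`,
`f (s + n) * Δⁿg s = -∑_{i + j = n, i ≥ 1} (n choose i) Δⁱf (s + j) Δʲg s`,
and strong induction on `n` yields `pⁿ ∣ Δⁿg s`. -/

open fwdDiff Function

section Leibniz

variable {M R : Type*} [AddCommMonoid M] [Ring R] (h : M)

theorem fwdDiff_mul (f g : M → R) :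
    Δ_[h] (f * g) = Δ_[h] f * g + (fun x ↦ f (x + h)) * Δ_[h] g := by
  ext x
  simp only [fwdDiff, Pi.mul_apply, Pi.add_apply]
  noncomm_ring

theorem fwdDiff_iter_mul (f g : M → R) (n : ℕ) (y : M) :
    Δ_[h] ^[n] (f * g) y = ∑ ij ∈ antidiagonal n,
      n.choose ij.1 • (Δ_[h] ^[ij.1] f (y + ij.2 • h) * Δ_[h] ^[ij.2] g y) := by
  induction n generalizing f g with
  | zero => simp
  | succ n ih =>
    rw [iterate_succ_apply, fwdDiff_mul, fwdDiff_iter_add, Pi.add_apply, ih, ih,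
      sum_antidiagonal_choose_succ_nsmul
        (fun i j ↦ Δ_[h] ^[i] f (y + j • h) * Δ_[h] ^[j] g y) n, add_comm]
    congr 1
    · refine sum_congr rfl fun ⟨i, j⟩ _ ↦ ?_
      rw [fwdDiff_iter_comp_add, succ_nsmul, add_assoc, ← iterate_succ_apply]
    · refine sum_congr rfl fun ⟨i, j⟩ hij ↦ ?_
      rw [n.choose_symm_of_eq_add (mem_antidiagonal.1 hij).symm, ← iterate_succ_apply]

end Leibniz

theorem pow_dvd_fwdDiff_iter_of_mul_eq_one {M R : Type*} [AddCommMonoid M] [CommRing R] (h : M)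
    {f g : M → R} (hfg : f * g = 1) {π : R} (hf : ∀ n y, π ^ n ∣ Δ_[h] ^[n] f y) (n : ℕ)
    (y : M) : π ^ n ∣ Δ_[h] ^[n] g y := by
  induction n using Nat.strong_induction_on generalizing y with
  | _ n ih =>
  obtain _ | n := n
  · simp
  have hzero : Δ_[h] ^[n + 1] (f * g) y = 0 := by
    have hconst : Δ_[h] (0 : M → R) = 0 := fwdDiff_const h 0
    rw [hfg, iterate_succ_apply, show Δ_[h] (1 : M → R) = 0 from fwdDiff_const h 1,
      iterate_fixed hconst]
    rfl
  rw [fwdDiff_iter_mul, Nat.sum_antidiagonal_succ] at hzero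
  simp only [Nat.choose_zero_right, one_smul, iterate_zero, id_eq] at hzero
  have hg : g (y + (n + 1) • h) * f (y + (n + 1) • h) = 1 :=
    (mul_comm _ _).trans (congr_fun hfg _)
  rw [← one_mul (Δ_[h] ^[n + 1] g y), ← hg, mul_assoc, eq_neg_of_add_eq_zero_left hzero]
  refine (dvd_neg.2 (dvd_sum fun ⟨i, j⟩ hij ↦ ?_)).mul_left _
  obtain rfl : i + j = n := HasAntidiagonal.mem_antidiagonal.1 hij
  rw [add_right_comm, pow_add, nsmul_eq_mul]
  exact (mul_dvd_mul (hf _ _) (ih j (by omega) y)).mul_left _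

theorem Continuous.ring_inverse {X R : Type*} [TopologicalSpace X] [NormedRing R]
    [CompleteSpace R] {f : X → R} (hf : Continuous f) (hu : ∀ x, IsUnit (f x)) :
    Continuous fun x ↦ Ring.inverse (f x) :=
  continuous_iff_continuousAt.2 fun x ↦ by
    have h := NormedRing.inverse_continuousAt (hu x).unit
    rw [IsUnit.unit_spec] at h
    exact h.comp hf.continuousAt

namespace PadicInt

variable {p : ℕ} [Fact p.Prime]

theorem norm_sub_le_of_forall_norm_fwdDiff_le {E : Type*} [SeminormedAddCommGroup E]
    [IsUltrametricDist E] {f : ℤ_[p] → E} (hf : Continuous f) {r : ℝ}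
    (hr : ∀ s, ‖Δ_[1] f s‖ ≤ r) (s : ℤ_[p]) : ‖f s - f 0‖ ≤ r := by
  have hnat : ∀ n : ℕ, ‖f n - f 0‖ ≤ r := by
    intro n
    induction n with
    | zero => simpa using (norm_nonneg _).trans (hr 0)
    | succ n ih =>
      have hsplit : f (n + 1 : ℕ) - f 0 = Δ_[1] f n + (f n - f 0) := by
        simp only [fwdDiff, Nat.cast_succ]; abel
      rw [hsplit]
      exact (IsUltrametricDist.norm_add_le_max _ _).trans (max_le (hr n) ih)
  have hclosed : IsClosed {s | ‖f s - f 0‖ ≤ r} :=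
    isClosed_le (hf.sub continuous_const).norm continuous_const
  exact closure_minimal (Set.range_subset_iff.2 hnat) hclosed (denseRange_natCast s)

theorem norm_le_norm_p_of_dvd {x : ℤ_[p]} (hx : (p : ℤ_[p]) ∣ x) : ‖x‖ ≤ ‖(p : ℤ_[p])‖ := by
  obtain ⟨c, rfl⟩ := hx
  rw [norm_mul]
  exact mul_le_of_le_one_right (norm_nonneg _) (norm_le_one c)

theorem isUnit_of_forall_dvd_fwdDiff {f : ℤ_[p] → ℤ_[p]} (hf : Continuous f)
    (hΔ : ∀ s, (p : ℤ_[p]) ∣ Δ_[1] f s) (h0 : IsUnit (f 0)) (s : ℤ_[p]) : IsUnit (f s) := by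
  have hclose : ‖f 0 - f s‖ < 1 := calc
    ‖f 0 - f s‖ = ‖f s - f 0‖ := norm_sub_rev _ _
    _ ≤ ‖(p : ℤ_[p])‖ :=
      norm_sub_le_of_forall_norm_fwdDiff_le hf (fun s ↦ norm_le_norm_p_of_dvd (hΔ s)) s
    _ < 1 := (norm_lt_one_iff_dvd _).2 dvd_rfl
  rw [← add_sub_cancel (f s) (f 0)] at h0
  exact (IsLocalRing.isUnit_or_isUnit_of_isUnit_add h0).resolve_right (mem_nonunits.2 hclose)

end PadicInt

theorem deltaH_one_eq_fwdDiff_iter {p : ℕ} [Fact p.Prime] (f : ℤ_[p] → ℤ_[p]) (n : ℕ)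
    (s : ℤ_[p]) : deltaH p 1 f n s = Δ_[1] ^[n] f s := by
  rw [deltaH, fwdDiff_iter_eq_sum_shift]
  refine sum_congr rfl fun k _ ↦ ?_
  rw [zsmul_eq_mul, nsmul_eq_mul]
  push_cast
  ring

theorem stmt16 (p : ℕ) [Fact p.Prime] (f : ℤ_[p] → ℤ_[p]) (hf : KS2 p f)
    (h0 : IsUnit (f 0)) :
    (∀ s : ℤ_[p], IsUnit (f s)) ∧ KS2 p fun s => Ring.inverse (f s) := by
  obtain ⟨hcont, hdvd⟩ := hf
  simp only [deltaH_one_eq_fwdDiff_iter] at hdvd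
  have hunit : ∀ s, IsUnit (f s) :=
    PadicInt.isUnit_of_forall_dvd_fwdDiff hcont (fun s ↦ by simpa using hdvd 1 s) h0
  have hinv : f * (fun s ↦ Ring.inverse (f s)) = 1 :=
    funext fun s ↦ Ring.mul_inverse_cancel _ (hunit s)
  refine ⟨hunit, hcont.ring_inverse hunit, fun n s ↦ ?_⟩
  rw [deltaH_one_eq_fwdDiff_iter]
  exact pow_dvd_fwdDiff_iter_of_mul_eq_one 1 hinv hdvd n s
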